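/- For the fixed-share forecaster with optimally chosen η and α (depending on τ_0 and T), the τ_0-adaptive regret R_T = max over intervals [r,s] ⊆ [1,T] of length at most τ_0 of (Σ_{t=r}^s p_t·ℓ_t - min_{q∈Δ_d} Σ_{t=r}^s q·ℓ_t) satisfies R_T ≤ sqrt((τ_0/2)(τ_0 h(1/τ_0) + ln d)) ≤ sqrt((τ_0/2) ln(e d τ_0)). -/

import Mathlib

open Real Finset

/-- Binary entropy. -/
noncomputable def binEnt (x : ℝ) : ℝ := -x * Real.log x - (1 - x) * Real.log (1 - x)

/-!
Fix an interval `[r, s]` and a comparator `q`, and track the potential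
`Φ t = ∑ i, q i * log (p t i)`. By Hoeffding's lemma an exponential-weights step loses at most
`η²/8` against `q` on top of the change of potential; a share step costs at most `log (1-α)⁻¹`
and keeps every weight above `α/d`, so the potential at the start `r` is at least `log (α/d)`
wherever the interval starts. With `α = 1/τ₀` the `α`-terms on an interval of length at most
`τ₀` add up to at most `τ₀ h(1/τ₀)`, and optimising `η` gives the bound. For `τ₀ = 1` this
would be `α = 1`, which is excluded; there the interval is a single step, which loses at most
`1 - α/d ≤ √(log d / 2)` once `α` is close enough to `1`.
-/

open MeasureTheory ProbabilityTheory

section FiniteDistribution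

variable {ι : Type*} [Fintype ι]

/-- **Hoeffding's lemma** for a finitely supported distribution `p`. -/
theorem log_sum_mul_exp_le_of_mem_Icc {p x : ι → ℝ}
    (hp : ∀ i, 0 ≤ p i) (hp1 : ∑ i, p i = 1) {a b : ℝ} (hx : ∀ i, x i ∈ Set.Icc a b) (t : ℝ) :
    log (∑ i, p i * exp (t * x i)) ≤ t * ∑ i, p i * x i + (b - a) ^ 2 * t ^ 2 / 8 := by
  let _ : MeasurableSpace ι := ⊤
  have _ : DiscreteMeasurableSpace ι := ⟨fun _ => trivial⟩
  let μ : Measure ι := ∑ i, ENNReal.ofReal (p i) • Measure.dirac i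
  have integral_eq : ∀ f : ι → ℝ, ∫ i, f i ∂μ = ∑ i, p i * f i := by
    intro f
    rw [integral_finsetSum_measure fun i _ =>
      (integrable_dirac enorm_lt_top).smul_measure ENNReal.ofReal_ne_top]
    simp [integral_smul_measure, hp]
  have : IsProbabilityMeasure μ := ⟨by simp [μ, hp, ← ENNReal.ofReal_sum_of_nonneg, hp1]⟩
  have hoeffding := (hasSubgaussianMGF_of_mem_Icc (μ := μ) (X := x) (by fun_prop)
    (ae_of_all _ hx)).mgf_le t
  rw [mgf, integral_eq, integral_eq] at hoeffding
  set m := ∑ i, p i * x i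
  have centered : ∑ i, p i * exp (t * x i) = exp (t * m) * ∑ i, p i * exp (t * (x i - m)) := by
    rw [mul_sum]
    refine sum_congr rfl fun i _ => ?_
    rw [mul_left_comm, ← exp_add]
    ring_nf
  have pos : 0 < ∑ i, p i * exp (t * x i) := by
    obtain ⟨i, -, hi⟩ := exists_ne_zero_of_sum_ne_zero (hp1.trans_ne one_ne_zero)
    exact sum_pos' (fun j _ => mul_nonneg (hp j) (exp_pos _).le)
      ⟨i, mem_univ i, mul_pos ((hp i).lt_of_ne' hi) (exp_pos _)⟩
  rw [log_le_iff_le_exp pos, centered, exp_add]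
  gcongr
  refine hoeffding.trans_eq (congrArg exp ?_)
  simp only [NNReal.coe_pow, NNReal.coe_div, coe_nnnorm, norm_eq_abs, NNReal.coe_ofNat, div_pow,
    sq_abs]
  ring

lemma log_add_sum_mul_log_le {q w w' : ι → ℝ} (hq : ∀ i, 0 ≤ q i)
    (hq1 : ∑ i, q i = 1) {c : ℝ} (hc : 0 < c) (hw : ∀ i, 0 < w i) (hle : ∀ i, c * w i ≤ w' i) :
    log c + ∑ i, q i * log (w i) ≤ ∑ i, q i * log (w' i) := by
  calc log c + ∑ i, q i * log (w i) = ∑ i, q i * log (c * w i) := by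
        simp only [log_mul hc.ne' (hw _).ne', mul_add, sum_add_distrib, ← sum_mul, hq1, one_mul]
    _ ≤ ∑ i, q i * log (w' i) := by
        gcongr with i
        · exact hq i
        · exact mul_pos hc (hw i)
        · exact hle i

lemma sum_mul_sub_sum_mul_le_one_sub {p q ℓ : ι → ℝ}
    (hp : ∀ i, 0 ≤ p i) (hp1 : ∑ i, p i = 1) (hq : ∀ i, 0 ≤ q i) (hq1 : ∑ i, q i = 1)
    (hℓ : ∀ i, ℓ i ∈ Set.Icc (0 : ℝ) 1) {β : ℝ} (hβ : ∀ i, β ≤ p i) :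
    ∑ i, p i * ℓ i - ∑ i, q i * ℓ i ≤ 1 - β := by
  classical
  have : Nonempty ι := univ_nonempty_iff.1 (nonempty_of_sum_ne_zero (hp1.trans_ne one_ne_zero))
  obtain ⟨k, -, hk⟩ := exists_min_image univ ℓ univ_nonempty
  have best : ℓ k ≤ ∑ i, q i * ℓ i := by
    calc ℓ k = ∑ i, q i * ℓ k := by rw [← sum_mul, hq1, one_mul]
      _ ≤ ∑ i, q i * ℓ i := by gcongr with i; exacts [hq i, hk i (mem_univ i)]
  have excess : ∑ i, p i * ℓ i - ℓ k ≤ 1 - p k := by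
    calc ∑ i, p i * ℓ i - ℓ k = ∑ i, p i * (ℓ i - ℓ k) := by
          simp only [mul_sub, sum_sub_distrib, ← sum_mul, hp1, one_mul]
      _ ≤ ∑ i, p i * (if i = k then 0 else 1) := by
          gcongr with i
          · exact hp i
          · split_ifs with h
            · simp [h]
            · linarith [(hℓ i).2, (hℓ k).1]
      _ = 1 - p k := by simp [mul_ite, sum_ite, hp1, filter_ne', sum_erase_eq_sub]
  linarith [hβ k]

noncomputable def expWeights (η : ℝ) (p ℓ : ι → ℝ) (i : ι) : ℝ :=
  p i * exp (-η * ℓ i) / ∑ j, p j * exp (-η * ℓ j)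

variable {η : ℝ} {p ℓ : ι → ℝ}

lemma expWeights_pos [Nonempty ι] (hp : ∀ i, 0 < p i) (i : ι) : 0 < expWeights η p ℓ i :=
  div_pos (mul_pos (hp i) (exp_pos _))
    (sum_pos (fun j _ => mul_pos (hp j) (exp_pos _)) univ_nonempty)

lemma sum_expWeights [Nonempty ι] (hp : ∀ i, 0 < p i) : ∑ i, expWeights η p ℓ i = 1 := by
  simp only [expWeights]
  rw [← sum_div, div_self (sum_pos (fun j _ => mul_pos (hp j) (exp_pos _)) univ_nonempty).ne']

lemma expWeights_le_one [Nonempty ι] (hp : ∀ i, 0 < p i) (i : ι) : expWeights η p ℓ i ≤ 1 :=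
  sum_expWeights hp ▸
    single_le_sum (fun j _ => (expWeights_pos hp j).le) (mem_univ i)

lemma mul_sub_le_sum_mul_log_expWeights_sub (hp : ∀ i, 0 < p i) (hp1 : ∑ i, p i = 1)
    (hℓ : ∀ i, ℓ i ∈ Set.Icc (0 : ℝ) 1) {q : ι → ℝ} (hq1 : ∑ i, q i = 1) (η : ℝ) :
    η * (∑ i, p i * ℓ i - ∑ i, q i * ℓ i) ≤
      η ^ 2 / 8 + ∑ i, q i * log (expWeights η p ℓ i) - ∑ i, q i * log (p i) := by
  have : Nonempty ι := univ_nonempty_iff.1 (nonempty_of_sum_ne_zero (hp1.trans_ne one_ne_zero))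
  set Z := ∑ j, p j * exp (-η * ℓ j)
  have hZ : 0 < Z := sum_pos (fun j _ => mul_pos (hp j) (exp_pos _)) univ_nonempty
  have log_expWeights : ∀ i, log (expWeights η p ℓ i) = log (p i) - η * ℓ i - log Z := by
    intro i
    rw [expWeights, log_div (mul_pos (hp i) (exp_pos _)).ne' hZ.ne',
      log_mul (hp i).ne' (exp_pos _).ne', log_exp]
    ring
  have potential_gain :
      ∑ i, q i * log (expWeights η p ℓ i) - ∑ i, q i * log (p i) =
        -η * ∑ i, q i * ℓ i - log Z := by
    simp only [log_expWeights, mul_sub, sum_sub_distrib, ← sum_mul, hq1, one_mul,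
      mul_left_comm (q _) η, ← mul_sum]
    ring
  have hoeffding : log Z ≤ -η * ∑ i, p i * ℓ i + η ^ 2 / 8 := by
    simpa [Z, mul_comm] using
      log_sum_mul_exp_le_of_mem_Icc (fun i => (hp i).le) hp1 hℓ (-η)
  linarith

end FiniteDistribution

lemma sum_Icc_le_of_potential {a Φ Ψ : ℕ → ℝ} {c L : ℝ} {r s : ℕ} (hrs : r ≤ s)
    (hstep : ∀ t ∈ Icc r s, a t ≤ c + Ψ t - Φ t)
    (hlink : ∀ t ∈ Ico r s, Ψ t ≤ Φ (t + 1) + L) :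
    ∑ t ∈ Icc r s, a t ≤ (s - r + 1 : ℕ) * c + (s - r : ℕ) * L + Ψ s - Φ r := by
  induction s, hrs using Nat.le_induction with
  | base => simpa using hstep r (by simp)
  | succ s hrs ih =>
    have ih := ih (fun t ht => hstep t (Icc_subset_Icc_right s.le_succ ht))
      (fun t ht => hlink t (Ico_subset_Ico_right s.le_succ ht))
    have step := hstep (s + 1) (by simp; omega)
    have link := hlink s (by simp; omega)
    rw [sum_Icc_succ_top (by omega)]
    push_cast [Nat.cast_sub hrs, Nat.cast_sub (Nat.le_succ_of_le hrs)] at ih ⊢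
    linarith

lemma two_mul_one_sub_div_sq_le_log {a x : ℝ} (h2 : 2 * (1 - a / 2) ^ 2 ≤ log 2) (hx : 2 ≤ x) :
    2 * (1 - a / x) ^ 2 ≤ log x := by
  let f : ℝ → ℝ := fun y => log y - 2 * (1 - a / y) ^ 2
  have hf : ∀ y, 0 < y → HasDerivAt f ((y - 2 * a) ^ 2 / y ^ 3) y := by
    intro y hy
    have := (hasDerivAt_log hy.ne').sub
      ((((hasDerivAt_inv hy.ne').const_mul a).const_sub 1).pow 2 |>.const_mul 2)
    refine this.congr_deriv ?_
    norm_num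
    field_simp
    ring
  have mono : MonotoneOn f (Set.Ici 2) := by
    refine monotoneOn_of_hasDerivWithinAt_nonneg (convex_Ici 2)
      (fun y hy => (hf y (by linarith [Set.mem_Ici.1 hy])).continuousAt.continuousWithinAt)
      (fun y hy => (hf y ?_).hasDerivWithinAt) (fun y hy => ?_)
    all_goals rw [interior_Ici] at hy; have hy : 0 < y := by linarith [Set.mem_Ioi.1 hy]
    · exact hy
    · positivity
  have := mono Set.self_mem_Ici hx hx
  simp only [f] at this
  linarith

lemma mul_binEnt_one_div {τ : ℝ} (hτ : τ ≠ 0) :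
    τ * binEnt (1 / τ) = log τ + (τ - 1) * log (1 - 1 / τ)⁻¹ := by
  rw [binEnt, log_inv, one_div, log_inv]
  field_simp
  ring

lemma binEnt_le {x : ℝ} (hx : x ≤ 1) : binEnt x ≤ x * (1 - log x) := by
  have := negMulLog_le_one_sub_self (sub_nonneg.2 hx)
  rw [negMulLog] at this
  rw [binEnt]
  linarith

lemma log_inv_one_sub_nonneg {x : ℝ} (h0 : 0 ≤ x) (h1 : x ≤ 1) : 0 ≤ log (1 - x)⁻¹ := by
  rw [log_inv, neg_nonneg]
  exact log_nonpos (by linarith) (by linarith)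

lemma mul_binEnt_one_div_add_log_pos {τ D : ℝ} (hτ : 1 < τ) (hD : 1 ≤ D) :
    0 < τ * binEnt (1 / τ) + log D := by
  have hτ0 : 0 < τ := by linarith
  have := log_inv_one_sub_nonneg (one_div_pos.2 hτ0).le ((div_le_one hτ0).2 hτ.le)
  rw [mul_binEnt_one_div hτ0.ne']
  have := log_pos hτ
  have := log_nonneg hD
  nlinarith

lemma mul_log_inv_one_sub_add_log_le {τ D : ℝ} {n : ℕ} (hn : n + 1 ≤ τ) (hD : 0 < D) :
    n * log (1 - 1 / τ)⁻¹ + log (D / (1 / τ)) ≤ τ * binEnt (1 / τ) + log D := by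
  have hτ : 1 ≤ τ := by linarith [n.cast_nonneg (α := ℝ)]
  have hτ0 : 0 < τ := by linarith
  have := log_inv_one_sub_nonneg (one_div_pos.2 hτ0).le ((div_le_one hτ0).2 hτ)
  rw [mul_binEnt_one_div hτ0.ne', div_div_eq_mul_div, div_one, log_mul hD.ne' hτ0.ne']
  nlinarith

lemma mul_binEnt_one_div_add_log_le {τ D : ℝ} (hτ : 1 ≤ τ) (hD : 0 < D) :
    τ * binEnt (1 / τ) + log D ≤ log (exp 1 * D * τ) := by
  have hτ0 : 0 < τ := by linarith
  have := mul_le_mul_of_nonneg_left (binEnt_le ((div_le_one hτ0).2 hτ)) hτ0.le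
  rw [log_mul (by positivity) hτ0.ne', log_mul (exp_pos 1).ne' hD.ne', log_exp]
  rw [one_div, log_inv, mul_inv_cancel_left₀ hτ0.ne', ← one_div] at this
  linarith

lemma le_sqrt_of_mul_le_sq_add {τ C R : ℝ} (hτ : 0 < τ) (hC : 0 < C)
    (h : √(8 * C / τ) * R ≤ τ * √(8 * C / τ) ^ 2 / 8 + C) : R ≤ √(τ / 2 * C) := by
  set η := √(8 * C / τ)
  have hη : 0 < η := sqrt_pos.2 (by positivity)
  have hηsq : η ^ 2 = 8 * C / τ := sq_sqrt (by positivity)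
  have hsqrtη : √(τ / 2 * C) * η = 2 * C := by
    rw [← sqrt_mul (by positivity), show τ / 2 * C * (8 * C / τ) = (2 * C) ^ 2 by
      field_simp; ring, sqrt_sq (by positivity)]
  rw [hηsq, show τ * (8 * C / τ) / 8 + C = 2 * C by field_simp; ring, ← hsqrtη] at h
  exact le_of_mul_le_mul_right (by linarith) hη

structure IsFixedShare (d T : ℕ) (η α : ℝ) (ℓ p v : ℕ → Fin d → ℝ) : Prop where
  init : ∀ j, p 1 j = 1 / d
  update : ∀ t ∈ Icc 1 T, ∀ j, v (t + 1) j = expWeights η (p t) (ℓ t) j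
  share : ∀ t ∈ Icc 1 T, ∀ j, p (t + 1) j = α / d + (1 - α) * v (t + 1) j

namespace IsFixedShare

variable {d T : ℕ} [NeZero d] {η α : ℝ} {ℓ p v : ℕ → Fin d → ℝ}

lemma div_le_and_sum_eq_one (h : IsFixedShare d T η α ℓ p v) (hα : α ∈ Set.Ioc 0 1) :
    ∀ t ∈ Icc 1 (T + 1), (∀ i, α / d ≤ p t i) ∧ ∑ i, p t i = 1 := by
  have hd : (0 : ℝ) < d := Nat.cast_pos.2 (NeZero.pos d)
  intro t ht
  obtain ⟨ht1, htT⟩ := mem_Icc.1 ht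
  induction t, ht1 using Nat.le_induction with
  | base =>
    refine ⟨fun i => ?_, ?_⟩
    · rw [h.init]
      exact div_le_div_of_nonneg_right hα.2 hd.le
    · simp [h.init, hd.ne']
  | succ t ht1 ih =>
    have htT' : t ∈ Icc 1 T := mem_Icc.2 ⟨ht1, by omega⟩
    obtain ⟨hlow, hsum⟩ := ih (mem_Icc.2 ⟨ht1, by omega⟩) (by omega)
    have hpos : ∀ i, 0 < p t i := fun i => (div_pos hα.1 hd).trans_le (hlow i)
    refine ⟨fun i => ?_, ?_⟩
    · rw [h.share t htT' i, h.update t htT' i]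
      have := (expWeights_pos (η := η) (ℓ := ℓ t) hpos i).le
      nlinarith [hα.2]
    · simp only [h.share t htT', h.update t htT', sum_add_distrib, ← mul_sum,
        sum_expWeights hpos, sum_const, card_univ, Fintype.card_fin, nsmul_eq_mul]
      field_simp
      ring

theorem regret_le (h : IsFixedShare d T η α ℓ p v)
    (hℓ : ∀ t ∈ Icc 1 T, ∀ j, ℓ t j ∈ Set.Icc (0 : ℝ) 1) (hα : α ∈ Set.Ioo 0 1) {r s : ℕ}
    (hr : 1 ≤ r) (hrs : r ≤ s) (hsT : s ≤ T) {q : Fin d → ℝ} (hq : ∀ i, 0 ≤ q i)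
    (hq1 : ∑ i, q i = 1) :
    η * (∑ t ∈ Icc r s, ∑ i, p t i * ℓ t i - ∑ t ∈ Icc r s, ∑ i, q i * ℓ t i) ≤
      (s - r + 1 : ℕ) * (η ^ 2 / 8) + (s - r : ℕ) * log (1 - α)⁻¹ + log (d / α) := by
  have hd : (0 : ℝ) < d := Nat.cast_pos.2 (NeZero.pos d)
  have inv : ∀ t ∈ Icc 1 T, (∀ i, α / d ≤ p t i) ∧ ∑ i, p t i = 1 := fun t ht =>
    h.div_le_and_sum_eq_one (Set.Ioo_subset_Ioc_self hα) t (Icc_subset_Icc_right T.le_succ ht)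
  have hpos : ∀ t ∈ Icc 1 T, ∀ i, 0 < p t i := fun t ht i =>
    (div_pos hα.1 hd).trans_le ((inv t ht).1 i)
  have hvpos : ∀ t ∈ Icc 1 T, ∀ i, 0 < v (t + 1) i := fun t ht i => by
    rw [h.update t ht]
    exact expWeights_pos (hpos t ht) i
  have mem : Icc r s ⊆ Icc 1 T := Icc_subset_Icc hr hsT
  set Φ : ℕ → ℝ := fun t => ∑ i, q i * log (p t i)
  set Ψ : ℕ → ℝ := fun t => ∑ i, q i * log (v (t + 1) i)
  have step : ∀ t ∈ Icc r s,
      η * (∑ i, p t i * ℓ t i - ∑ i, q i * ℓ t i) ≤ η ^ 2 / 8 + Ψ t - Φ t := by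
    intro t ht
    simp only [Ψ, Φ, h.update t (mem ht)]
    exact mul_sub_le_sum_mul_log_expWeights_sub (hpos t (mem ht)) (inv t (mem ht)).2
      (hℓ t (mem ht)) hq1 η
  have share : ∀ t ∈ Ico r s, Ψ t ≤ Φ (t + 1) + log (1 - α)⁻¹ := by
    intro t ht
    have ht : t ∈ Icc 1 T := mem (Ico_subset_Icc_self ht)
    have := log_add_sum_mul_log_le hq hq1 (sub_pos.2 hα.2) (hvpos t ht) (w' := p (t + 1))
      fun i => by linarith [h.share t ht i, div_pos hα.1 hd]
    rw [log_inv]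
    linarith
  have final : Ψ s ≤ 0 := by
    have hs := mem (right_mem_Icc.2 hrs)
    simpa using log_add_sum_mul_log_le hq hq1 one_pos (hvpos s hs) (w' := 1) fun i => by
      rw [h.update s hs, one_mul]
      exact expWeights_le_one (hpos s hs) i
  have initial : log (α / d) ≤ Φ r := by
    simpa using log_add_sum_mul_log_le hq hq1 (div_pos hα.1 hd) (w := 1) (fun _ => one_pos)
      fun i => by simpa using (inv r (mem (left_mem_Icc.2 hrs))).1 i
  have : log (d / α) = -log (α / d) := by rw [← log_inv, inv_div]
  rw [← sum_sub_distrib, mul_sum, this]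
  linarith [sum_Icc_le_of_potential hrs step share]

theorem regret_le_sqrt {τ C : ℝ} (hτ : 0 < τ) (hC : C = τ * binEnt (1 / τ) + log d)
    (hC0 : 0 < C) (h : IsFixedShare d T √(8 * C / τ) (1 / τ) ℓ p v)
    (hℓ : ∀ t ∈ Icc 1 T, ∀ j, ℓ t j ∈ Set.Icc (0 : ℝ) 1) (hα : 1 / τ ∈ Set.Ioo 0 1)
    {r s : ℕ} (hr : 1 ≤ r) (hrs : r ≤ s) (hsT : s ≤ T) (hsr : ((s - r : ℕ) : ℝ) + 1 ≤ τ)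
    {q : Fin d → ℝ} (hq : ∀ i, 0 ≤ q i) (hq1 : ∑ i, q i = 1) :
    ∑ t ∈ Icc r s, ∑ i, p t i * ℓ t i - ∑ t ∈ Icc r s, ∑ i, q i * ℓ t i ≤ √(τ / 2 * C) := by
  refine le_sqrt_of_mul_le_sq_add hτ hC0 ?_
  have regret := h.regret_le hℓ hα hr hrs hsT hq hq1
  have penalty := mul_log_inv_one_sub_add_log_le hsr (Nat.cast_pos.2 (NeZero.pos d))
  have length := mul_le_mul_of_nonneg_right hsr (by positivity : 0 ≤ √(8 * C / τ) ^ 2 / 8)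
  push_cast at regret
  linarith

theorem regret_single_le_sqrt_log (h : IsFixedShare d T η α ℓ p v) (hα : α ∈ Set.Ioc 0 1)
    (hα2 : 2 * (1 - α / 2) ^ 2 ≤ log 2) (hℓ : ∀ t ∈ Icc 1 T, ∀ j, ℓ t j ∈ Set.Icc (0 : ℝ) 1)
    {r : ℕ} (hr : r ∈ Icc 1 T) {q : Fin d → ℝ} (hq : ∀ i, 0 ≤ q i) (hq1 : ∑ i, q i = 1) :
    ∑ i, p r i * ℓ r i - ∑ i, q i * ℓ r i ≤ √(log d / 2) := by
  obtain ⟨hlow, hsum⟩ := h.div_le_and_sum_eq_one hα r (Icc_subset_Icc_right T.le_succ hr)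
  have hp : ∀ i, 0 ≤ p r i := fun i =>
    (div_pos hα.1 (Nat.cast_pos.2 (NeZero.pos d))).le.trans (hlow i)
  rcases (NeZero.one_le : 1 ≤ d).eq_or_lt with rfl | hd
  · have hp1 : ∀ i, 1 ≤ p r i := fun i => by simp [Subsingleton.elim i 0] at hsum ⊢; linarith
    calc _ ≤ 1 - 1 := sum_mul_sub_sum_mul_le_one_sub hp hsum hq hq1 (hℓ r hr) hp1
      _ ≤ _ := by simp
  · have hd2 : (2 : ℝ) ≤ d := by exact_mod_cast hd
    calc _ ≤ 1 - α / d := sum_mul_sub_sum_mul_le_one_sub hp hsum hq hq1 (hℓ r hr) hlow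
      _ ≤ √(log d / 2) := le_sqrt_of_sq_le (by linarith [two_mul_one_sub_div_sq_le_log hα2 hd2])

end IsFixedShare

theorem stmt9_general (d : ℕ) (hd : 1 ≤ d) (T τ0 : ℕ) (hτ0 : 1 ≤ τ0) :
    ∃ η > (0 : ℝ), ∃ α ∈ Set.Ioo (0 : ℝ) 1,
      ∀ (ℓ p v : ℕ → Fin d → ℝ),
      (∀ t ∈ Finset.Icc 1 T, ∀ j, ℓ t j ∈ Set.Icc (0 : ℝ) 1) →
      (∀ j, p 1 j = 1 / d) →
      (∀ t ∈ Finset.Icc 1 T, ∀ j,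
        v (t + 1) j = p t j * Real.exp (-η * ℓ t j) / ∑ i, p t i * Real.exp (-η * ℓ t i)) →
      (∀ t ∈ Finset.Icc 1 T, ∀ j,
        p (t + 1) j = α / d + (1 - α) * v (t + 1) j) →
      (∀ r s : ℕ, 1 ≤ r → r ≤ s → s ≤ T → s + 1 - r ≤ τ0 →
        ∀ q : Fin d → ℝ, (∀ i, 0 ≤ q i) → (∑ i, q i = 1) →
          ∑ t ∈ Finset.Icc r s, (∑ i, p t i * ℓ t i)
              - ∑ t ∈ Finset.Icc r s, (∑ i, q i * ℓ t i)
            ≤ Real.sqrt ((τ0 / 2) * (τ0 * binEnt (1 / τ0) + Real.log d)))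
      ∧ Real.sqrt (((τ0 : ℝ) / 2) * (τ0 * binEnt (1 / τ0) + Real.log d))
        ≤ Real.sqrt (((τ0 : ℝ) / 2) * Real.log (Real.exp 1 * d * τ0)) := by
  have : NeZero d := ⟨by omega⟩
  have hτ : (1 : ℝ) ≤ τ0 := by exact_mod_cast hτ0
  have entropy := sqrt_le_sqrt <| mul_le_mul_of_nonneg_left
    (mul_binEnt_one_div_add_log_le (D := d) hτ (by positivity)) (by positivity : (0 : ℝ) ≤ τ0 / 2)
  rcases hτ0.eq_or_lt with rfl | hτ2
  · refine ⟨1, one_pos, 9 / 10, by norm_num, fun ℓ p v hℓ hp1 hv hpr => ⟨?_, entropy⟩⟩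
    intro r s hr hrs hsT hsr q hq hq1
    obtain rfl : s = r := by omega
    have hα2 : 2 * (1 - 9 / 10 / 2) ^ 2 ≤ log 2 := by linarith [log_two_gt_d9]
    simpa [binEnt, div_eq_inv_mul] using IsFixedShare.regret_single_le_sqrt_log
      ⟨hp1, hv, hpr⟩ (by norm_num) hα2 hℓ (mem_Icc.2 ⟨hr, hsT⟩) hq hq1
  · have hτ1 : (1 : ℝ) < τ0 := by exact_mod_cast hτ2
    have hC := mul_binEnt_one_div_add_log_pos hτ1 (by exact_mod_cast hd : (1 : ℝ) ≤ d)
    have hα : 1 / (τ0 : ℝ) ∈ Set.Ioo 0 1 := ⟨by positivity, (div_lt_one (by positivity)).2 hτ1⟩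
    refine ⟨√(8 * (τ0 * binEnt (1 / τ0) + log d) / τ0), sqrt_pos.2 (by positivity), _, hα,
      fun ℓ p v hℓ hp1 hv hpr => ⟨?_, entropy⟩⟩
    intro r s hr hrs hsT hsr q hq hq1
    exact IsFixedShare.regret_le_sqrt (by positivity) rfl hC ⟨hp1, hv, hpr⟩ hℓ hα hr hrs hsT
      (by exact_mod_cast (by omega : s - r + 1 ≤ τ0)) hq hq1

/-- Corollary 2 of the paper: with `η` and `α` optimally chosen (depending on
`τ_0` and `T`), the fixed-share forecaster has `τ_0`-adaptive regret at most
`sqrt((τ_0/2)(τ_0 h(1/τ_0) + ln d)) ≤ sqrt((τ_0/2) ln(e d τ_0))`. -/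
theorem stmt9 (d : ℕ) (hd : 1 ≤ d) (T τ0 : ℕ) (hT : 1 ≤ T) (hτ0 : 1 ≤ τ0)
    (hτ0T : τ0 ≤ T) :
    ∃ η > (0 : ℝ), ∃ α ∈ Set.Ioo (0 : ℝ) 1,
      ∀ (ℓ p v : ℕ → Fin d → ℝ),
      (∀ t ∈ Finset.Icc 1 T, ∀ j, ℓ t j ∈ Set.Icc (0 : ℝ) 1) →
      (∀ j, p 1 j = 1 / d) →
      (∀ t ∈ Finset.Icc 1 T, ∀ j,
        v (t + 1) j = p t j * Real.exp (-η * ℓ t j) / ∑ i, p t i * Real.exp (-η * ℓ t i)) →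
      (∀ t ∈ Finset.Icc 1 T, ∀ j,
        p (t + 1) j = α / d + (1 - α) * v (t + 1) j) →
      (∀ r s : ℕ, 1 ≤ r → r ≤ s → s ≤ T → s + 1 - r ≤ τ0 →
        ∀ q : Fin d → ℝ, (∀ i, 0 ≤ q i) → (∑ i, q i = 1) →
          ∑ t ∈ Finset.Icc r s, (∑ i, p t i * ℓ t i)
              - ∑ t ∈ Finset.Icc r s, (∑ i, q i * ℓ t i)
            ≤ Real.sqrt ((τ0 / 2) * (τ0 * binEnt (1 / τ0) + Real.log d)))
      ∧ Real.sqrt (((τ0 : ℝ) / 2) * (τ0 * binEnt (1 / τ0) + Real.log d))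
        ≤ Real.sqrt (((τ0 : ℝ) / 2) * Real.log (Real.exp 1 * d * τ0)) :=
  stmt9_general d hd T τ0 hτ0
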